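/- arXiv:1210.4949 — 2 statements merged into one kernel-verified Lean document; each statement's English description precedes it below -/
import Mathlib

section
/- Let M be an n×n matrix over RatFunc ℂ all of whose entries have intDegree ≤ 0, let B be a nonempty proper subset of Fin n with complement I, and let S(M) := (M - X • 1)⁻¹ + X • 1 be the spectral inverse of M. Then the submatrix [S(M)]_II - X • 1 is invertible, so the isospectral reduction R(S(M);B) exists, and every entry of the matrix R(S(M);B) - X • 1 has intDegree ≤ 0. -/
set_option synthInstance.maxHeartbeats 1000000
set_option maxHeartbeats 1000000

open Matrix

/-- The isospectral reduction of `M` over `B`, with interior index set `I = Bᶜ`: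
`R(M;B) = M_BB - M_BI (M_II - X•1)⁻¹ M_IB`. -/
noncomputable def isoRed {α : Type} [Fintype α] [DecidableEq α]
    (M : Matrix α α (RatFunc ℂ)) (B : Finset α) : Matrix ↥B ↥B (RatFunc ℂ) :=
  M.submatrix (Subtype.val : ↥B → α) (Subtype.val : ↥B → α) -
    M.submatrix (Subtype.val : ↥B → α) (Subtype.val : ↥Bᶜ → α) *
      (M.submatrix (Subtype.val : ↥Bᶜ → α) (Subtype.val : ↥Bᶜ → α) -
        (RatFunc.X : RatFunc ℂ) • 1)⁻¹ *
      M.submatrix (Subtype.val : ↥Bᶜ → α) (Subtype.val : ↥B → α)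

/-- The spectral inverse of a square matrix over `RatFunc ℂ`:
`S(M) = (M - X•1)⁻¹ + X•1`. -/
noncomputable def specInv {α : Type} [Fintype α] [DecidableEq α]
    (M : Matrix α α (RatFunc ℂ)) : Matrix α α (RatFunc ℂ) :=
  (M - (RatFunc.X : RatFunc ℂ) • 1)⁻¹ + (RatFunc.X : RatFunc ℂ) • 1

/-!
Put `A = M - X • 1` and `P = A⁻¹`, so that `S(M) - X • 1 = P`. For any `N`, `R(N;B) - X • 1`
is the Schur complement of the block `(N - X • 1)_II` in `N - X • 1`; hence `R(S(M);B) - X • 1`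
is the Schur complement of `P_II` in `P = A⁻¹`, and the block form of the inverse identifies it
with `(A_BB)⁻¹ = (M_BB - X • 1)⁻¹`.

It remains to see that `N - X • 1` has an inverse with entries of degree `≤ 0` whenever `N` has
such entries. For the valuation at infinity these entries form a local ring `O`, and
`N - X • 1 = -X • (1 - X⁻¹ • N)`, where `1 - X⁻¹ • N` is a matrix over `O` reducing to `1` modulo
the maximal ideal, so its determinant is a unit of `O`.
-/

namespace Matrix

section Schur

variable {R : Type*} [CommRing R]

theorem isUnit_and_schur_eq_inv_of_blocks {m n : Type*} [Fintype m] [DecidableEq m]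
    [Fintype n] [DecidableEq n]
    {A₁₁ P₁₁ : Matrix m m R} {A₁₂ P₁₂ : Matrix m n R} {A₂₁ P₂₁ : Matrix n m R}
    {A₂₂ P₂₂ : Matrix n n R} (hA₁₁ : IsUnit A₁₁)
    (h₁₁ : A₁₁ * P₁₁ + A₁₂ * P₂₁ = 1) (h₁₂ : A₁₁ * P₁₂ + A₁₂ * P₂₂ = 0)
    (h₂₁ : P₂₁ * A₁₁ + P₂₂ * A₂₁ = 0) (h₂₂ : P₂₁ * A₁₂ + P₂₂ * A₂₂ = 1) :
    IsUnit P₂₂ ∧ P₁₁ - P₁₂ * P₂₂⁻¹ * P₂₁ = A₁₁⁻¹ := by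
  have hdet := (isUnit_iff_isUnit_det A₁₁).1 hA₁₁
  have hP₁₂ : P₁₂ = -(A₁₁⁻¹ * A₁₂ * P₂₂) :=
    calc P₁₂ = A₁₁⁻¹ * (A₁₁ * P₁₂) := (nonsing_inv_mul_cancel_left A₁₁ P₁₂ hdet).symm
      _ = -(A₁₁⁻¹ * A₁₂ * P₂₂) := by
        rw [eq_neg_of_add_eq_zero_left h₁₂, Matrix.mul_neg, Matrix.mul_assoc]
  have hP₂₁ : P₂₁ = -(P₂₂ * A₂₁ * A₁₁⁻¹) :=
    calc P₂₁ = P₂₁ * A₁₁ * A₁₁⁻¹ := (mul_nonsing_inv_cancel_right A₁₁ P₂₁ hdet).symm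
      _ = -(P₂₂ * A₂₁ * A₁₁⁻¹) := by rw [eq_neg_of_add_eq_zero_left h₂₁, Matrix.neg_mul]
  have hP₂₂_mul_schur : P₂₂ * (A₂₂ - A₂₁ * A₁₁⁻¹ * A₁₂) = 1 := by
    rw [← h₂₂, hP₂₁]
    simp only [Matrix.mul_sub, Matrix.neg_mul, Matrix.mul_assoc]
    abel
  have hP₁₂_mul_inv : P₁₂ * P₂₂⁻¹ = -(A₁₁⁻¹ * A₁₂) := by
    rw [hP₁₂, inv_eq_right_inv hP₂₂_mul_schur, Matrix.neg_mul, Matrix.mul_assoc,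
      hP₂₂_mul_schur, Matrix.mul_one]
  refine ⟨(isUnit_iff_isUnit_det _).2 (isUnit_det_of_right_inverse hP₂₂_mul_schur), ?_⟩
  calc P₁₁ - P₁₂ * P₂₂⁻¹ * P₂₁ = A₁₁⁻¹ * (A₁₁ * P₁₁ + A₁₂ * P₂₁) := by
        rw [hP₁₂_mul_inv, Matrix.mul_add, nonsing_inv_mul_cancel_left A₁₁ P₁₁ hdet,
          Matrix.neg_mul, sub_neg_eq_add, Matrix.mul_assoc]
    _ = A₁₁⁻¹ := by rw [h₁₁, Matrix.mul_one]

variable {α : Type*} [DecidableEq α]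

theorem submatrix_one_of_ne {β γ : Type*} {f : β → α} {g : γ → α} (h : ∀ i j, f i ≠ g j) :
    (1 : Matrix α α R).submatrix f g = 0 := by
  ext i j
  simp [h i j]

theorem submatrix_sub_smul_one_of_ne (A : Matrix α α R) (t : R) {β γ : Type*} {f : β → α}
    {g : γ → α} (h : ∀ i j, f i ≠ g j) : (A - t • 1).submatrix f g = A.submatrix f g := by
  ext i j
  simp [h i j]

theorem submatrix_sub_smul_one_of_injective (A : Matrix α α R) (t : R) {β : Type*}
    [DecidableEq β] {e : β → α} (he : Function.Injective e) :
    (A - t • 1).submatrix e e = A.submatrix e e - t • 1 := by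
  ext i j
  simp [one_apply, he.eq_iff]

variable [Fintype α]

theorem submatrix_mul_eq_add_compl {β γ : Type*} (A P : Matrix α α R) (B : Finset α)
    (f : β → α) (g : γ → α) :
    (A * P).submatrix f g =
      A.submatrix f (Subtype.val : B → α) * P.submatrix (Subtype.val : B → α) g +
        A.submatrix f (Subtype.val : ↥Bᶜ → α) * P.submatrix (Subtype.val : ↥Bᶜ → α) g := by
  ext i j
  simp only [Matrix.submatrix_apply, Matrix.mul_apply, Matrix.add_apply]
  rw [Finset.sum_coe_sort B (fun k => A (f i) k * P k (g j)),
    Finset.sum_coe_sort Bᶜ (fun k => A (f i) k * P k (g j)),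
    Finset.sum_add_sum_compl B (fun k => A (f i) k * P k (g j))]

theorem val_ne_val_of_compl {B : Finset α} (i : B) (j : ↥Bᶜ) : (i : α) ≠ j :=
  ne_of_mem_of_not_mem i.2 (Finset.mem_compl.1 j.2)

theorem submatrix_one_compl (B : Finset α) :
    (1 : Matrix α α R).submatrix (Subtype.val : B → α) (Subtype.val : ↥Bᶜ → α) = 0 :=
  submatrix_one_of_ne val_ne_val_of_compl

theorem submatrix_compl_one (B : Finset α) :
    (1 : Matrix α α R).submatrix (Subtype.val : ↥Bᶜ → α) (Subtype.val : B → α) = 0 :=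
  submatrix_one_of_ne fun i j => (val_ne_val_of_compl j i).symm

/-- `A_BB - A_BI A_II⁻¹ A_IB` with `I = Bᶜ`: the Schur complement of the block `A_II`. -/
noncomputable def schurComplement (A : Matrix α α R) (B : Finset α) : Matrix B B R :=
  A.submatrix (Subtype.val : B → α) (Subtype.val : B → α) -
    A.submatrix (Subtype.val : B → α) (Subtype.val : ↥Bᶜ → α) *
      (A.submatrix (Subtype.val : ↥Bᶜ → α) (Subtype.val : ↥Bᶜ → α))⁻¹ *
        A.submatrix (Subtype.val : ↥Bᶜ → α) (Subtype.val : B → α)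

theorem isUnit_inv_submatrix_compl_and_schurComplement_inv {A : Matrix α α R} (hA : IsUnit A)
    {B : Finset α} (hAB : IsUnit (A.submatrix (Subtype.val : B → α) (Subtype.val : B → α))) :
    IsUnit (A⁻¹.submatrix (Subtype.val : ↥Bᶜ → α) (Subtype.val : ↥Bᶜ → α)) ∧
      A⁻¹.schurComplement B = (A.submatrix (Subtype.val : B → α) (Subtype.val : B → α))⁻¹ := by
  have hAP : A * A⁻¹ = 1 := mul_nonsing_inv A ((isUnit_iff_isUnit_det A).1 hA)
  have hPA : A⁻¹ * A = 1 := nonsing_inv_mul A ((isUnit_iff_isUnit_det A).1 hA)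
  have h₁₁ := congrArg (·.submatrix (Subtype.val : B → α) (Subtype.val : B → α)) hAP
  have h₁₂ := congrArg (·.submatrix (Subtype.val : B → α) (Subtype.val : ↥Bᶜ → α)) hAP
  have h₂₁ := congrArg (·.submatrix (Subtype.val : ↥Bᶜ → α) (Subtype.val : B → α)) hPA
  have h₂₂ := congrArg (·.submatrix (Subtype.val : ↥Bᶜ → α) (Subtype.val : ↥Bᶜ → α)) hPA
  simp only [submatrix_mul_eq_add_compl _ _ B, submatrix_one_compl, submatrix_compl_one,
    submatrix_one _ Subtype.val_injective] at h₁₁ h₁₂ h₂₁ h₂₂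
  exact isUnit_and_schur_eq_inv_of_blocks hAB h₁₁ h₁₂ h₂₁ h₂₂

end Schur

section IntegralEntries

variable {α : Type*} [Fintype α] [DecidableEq α]

open IsLocalRing in
theorem isUnit_det_one_sub_of_mem_maximalIdeal {R : Type*} [CommRing R] [IsLocalRing R]
    {E : Matrix α α R} (hE : ∀ i j, E i j ∈ maximalIdeal R) : IsUnit (1 - E).det := by
  refine IsUnit.of_map (residue R) _ ?_
  have hE0 : E.map (residue R) = 0 := by
    ext i j
    exact (residue_eq_zero_iff _).2 (hE i j)
  rw [RingHom.map_det, RingHom.mapMatrix_apply, Matrix.map_sub _ (map_sub _),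
    Matrix.map_one _ (map_zero _) (map_one _), hE0, sub_zero, det_one]
  exact isUnit_one

theorem isUnit_sub_smul_one_and_valuation_inv_le_one {K Γ₀ : Type*} [Field K]
    [LinearOrderedCommGroupWithZero Γ₀] (v : Valuation K Γ₀) {N : Matrix α α K}
    (hN : ∀ i j, v (N i j) ≤ 1) {t : K} (ht : 1 < v t) :
    IsUnit (N - t • 1) ∧ ∀ i j, v ((N - t • 1)⁻¹ i j) ≤ 1 := by
  set O := v.valuationSubring
  have ht0 : t ≠ 0 := by
    rintro rfl
    simp at ht
  have hs : v t⁻¹ < 1 := by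
    rw [map_inv₀]
    exact inv_lt_one_of_one_lt₀ ht
  let s : O := ⟨t⁻¹, hs.le⟩
  let N' : Matrix α α O := fun i j => ⟨N i j, hN i j⟩
  set C := 1 - s • N'
  have hC : IsUnit C.det := by
    refine isUnit_det_one_sub_of_mem_maximalIdeal fun i j => ?_
    rw [Valuation.mem_maximalIdeal_iff]
    change v (t⁻¹ * N i j) < 1
    rw [map_mul]
    exact mul_lt_one_of_lt_of_le hs (hN i j)
  have hmap : N - t • 1 = (-t) • C.map O.subtype := by
    ext i j
    change N i j - t * (1 : Matrix α α K) i j = -t * ((1 : Matrix α α O) i j - t⁻¹ * N i j)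
    rw [one_apply, one_apply]
    split_ifs <;> simp only [OneMemClass.coe_one, ZeroMemClass.coe_zero] <;> field_simp <;> ring
  have hinv : ((-t)⁻¹ • C⁻¹.map O.subtype) * (N - t • 1) = 1 := by
    rw [hmap, smul_mul_smul_comm, inv_mul_cancel₀ (neg_ne_zero.2 ht0), one_smul,
      ← Matrix.map_mul, nonsing_inv_mul _ hC, Matrix.map_one _ (map_zero _) (map_one _)]
  refine ⟨(isUnit_iff_isUnit_det _).2 (isUnit_det_of_left_inverse hinv), fun i j => ?_⟩
  rw [inv_eq_left_inv hinv, smul_apply, smul_eq_mul, map_mul, map_inv₀, Valuation.map_neg]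
  exact mul_le_one' (inv_le_one_of_one_le₀ ht.le) (C⁻¹ i j).2

end IntegralEntries

end Matrix

namespace RatFunc

theorem inftyValuation_le_one_iff {F : Type*} [Field F] [DecidableEq (RatFunc F)]
    (w : RatFunc F) : inftyValuation F w ≤ 1 ↔ w.intDegree ≤ 0 := by
  rcases eq_or_ne w 0 with rfl | hw
  · simp
  · rw [inftyValuation_apply, inftyValuation_of_nonzero F hw, ← WithZero.exp_zero,
      WithZero.exp_le_exp]

theorem isUnit_sub_X_smul_one_and_intDegree_inv_nonpos {F : Type*} [Field F] {α : Type*}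
    [Fintype α] [DecidableEq α] {N : Matrix α α (RatFunc F)}
    (hN : ∀ i j, (N i j).intDegree ≤ 0) :
    IsUnit (N - (X : RatFunc F) • 1) ∧ ∀ i j, ((N - (X : RatFunc F) • 1)⁻¹ i j).intDegree ≤ 0 := by
  classical
  simp only [← inftyValuation_le_one_iff] at hN ⊢
  refine isUnit_sub_smul_one_and_valuation_inv_le_one _ hN ?_
  rw [inftyValuation.X, ← WithZero.exp_zero, WithZero.exp_lt_exp]
  exact one_pos

end RatFunc

theorem isoRed_sub_X_smul_one {α : Type} [Fintype α] [DecidableEq α]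
    (M : Matrix α α (RatFunc ℂ)) (B : Finset α) :
    isoRed M B - (RatFunc.X : RatFunc ℂ) • 1 =
      (M - (RatFunc.X : RatFunc ℂ) • 1).schurComplement B := by
  rw [isoRed, schurComplement, submatrix_sub_smul_one_of_injective _ _ Subtype.val_injective,
    submatrix_sub_smul_one_of_injective _ _ Subtype.val_injective,
    submatrix_sub_smul_one_of_ne _ _ val_ne_val_of_compl,
    submatrix_sub_smul_one_of_ne _ _ fun i j => (val_ne_val_of_compl j i).symm]
  abel

theorem isoRed_specInv_exists_and_intDegree_le_zero_general {n : ℕ}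
    (M : Matrix (Fin n) (Fin n) (RatFunc ℂ))
    (hdeg : ∀ i j, (M i j).intDegree ≤ 0)
    (B : Finset (Fin n)) :
    IsUnit ((specInv M).submatrix (Subtype.val : ↥Bᶜ → Fin n) (Subtype.val : ↥Bᶜ → Fin n) -
      (RatFunc.X : RatFunc ℂ) • 1) ∧
    ∀ i j, ((isoRed (specInv M) B - (RatFunc.X : RatFunc ℂ) • 1) i j).intDegree ≤ 0 := by
  obtain ⟨hA, -⟩ := RatFunc.isUnit_sub_X_smul_one_and_intDegree_inv_nonpos hdeg
  obtain ⟨hAB, hdegAB⟩ := RatFunc.isUnit_sub_X_smul_one_and_intDegree_inv_nonpos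
    (N := M.submatrix (Subtype.val : B → Fin n) (Subtype.val : B → Fin n)) fun i j => hdeg _ _
  rw [← submatrix_sub_smul_one_of_injective _ _ Subtype.val_injective] at hAB hdegAB
  have hS : specInv M - (RatFunc.X : RatFunc ℂ) • 1 = (M - (RatFunc.X : RatFunc ℂ) • 1)⁻¹ :=
    add_sub_cancel_right _ _
  obtain ⟨hII, hschur⟩ := isUnit_inv_submatrix_compl_and_schurComplement_inv hA hAB
  refine ⟨?_, fun i j => ?_⟩
  · rwa [← submatrix_sub_smul_one_of_injective _ _ Subtype.val_injective, hS]
  · rw [isoRed_sub_X_smul_one, hS, hschur]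
    exact hdegAB i j

theorem isoRed_specInv_exists_and_intDegree_le_zero {n : ℕ}
    (M : Matrix (Fin n) (Fin n) (RatFunc ℂ))
    (hdeg : ∀ i j, (M i j).intDegree ≤ 0)
    (B : Finset (Fin n)) (hB : B.Nonempty) (hBproper : B ≠ Finset.univ) :
    IsUnit ((specInv M).submatrix (Subtype.val : ↥Bᶜ → Fin n) (Subtype.val : ↥Bᶜ → Fin n) -
      (RatFunc.X : RatFunc ℂ) • 1) ∧
    ∀ i j, ((isoRed (specInv M) B - (RatFunc.X : RatFunc ℂ) • 1) i j).intDegree ≤ 0 :=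
  isoRed_specInv_exists_and_intDegree_le_zero_general M hdeg B
end

section
/- Let M be an n×n matrix over RatFunc ℂ all of whose entries have intDegree ≤ 0, let S(M) := (M - X • 1)⁻¹ + X • 1 be its spectral inverse, and let B₁ ⊇ B₂ ⊇ ... ⊇ B_m be a decreasing chain of subsets of Fin n with B_m nonempty. Then the sequential isospectral reduction R(S(M); B₁, ..., B_m) := R(... R(R(S(M);B₁); B₂) ...; B_m), where at each step the reduction is taken over the copy of the next index set inside the index subtype of the current reduced matrix, exists and equals the single reduction R(S(M); B_m), after identifying the iterated subtypes with the subtype of B_m via the canonical equivalences. -/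
set_option synthInstance.maxHeartbeats 1000000
set_option maxHeartbeats 1000000

open Matrix

/-- The canonical equivalence between the copy of `C` inside the subtype of `B`
(for `C ⊆ B`) and the subtype of `C`. -/
def copyEquiv {α : Type} [Fintype α] [DecidableEq α] {B C : Finset α} (h : C ⊆ B) :
    ↥(Finset.univ.filter (fun x : ↥B => x.val ∈ C)) ≃ ↥C where
  toFun x := ⟨x.1.1, (Finset.mem_filter.mp x.2).2⟩
  invFun y := ⟨⟨y.1, h y.2⟩, Finset.mem_filter.mpr ⟨Finset.mem_univ _, y.2⟩⟩
  left_inv _ := Subtype.ext (Subtype.ext rfl)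
  right_inv _ := rfl

/-- One step of a sequential reduction: reduce a matrix indexed by the subtype of `B`
over the copy of `C ⊆ B` inside that subtype, and identify the resulting index type
with the subtype of `C` via the canonical equivalence. -/
noncomputable def redStep {α : Type} [Fintype α] [DecidableEq α] {B : Finset α}
    (A : Matrix ↥B ↥B (RatFunc ℂ)) (C : Finset α) (h : C ⊆ B) :
    Matrix ↥C ↥C (RatFunc ℂ) :=
  Matrix.reindex (copyEquiv h) (copyEquiv h)
    (isoRed A (Finset.univ.filter (fun x : ↥B => x.val ∈ C)))

/-- The sequential isospectral reduction `R(M; B₀, …, B_m)` of `M` over a decreasing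
chain `B₀ ⊇ B₁ ⊇ ⋯ ⊇ B_m` of index sets. -/
noncomputable def seqRed {n : ℕ} (M : Matrix (Fin n) (Fin n) (RatFunc ℂ)) :
    (m : ℕ) → (B : Fin (m + 1) → Finset (Fin n)) →
    (∀ k : Fin m, B k.succ ⊆ B k.castSucc) →
    Matrix ↥(B (Fin.last m)) ↥(B (Fin.last m)) (RatFunc ℂ)
  | 0, B, _ => isoRed M (B (Fin.last 0))
  | m + 1, B, h =>
      redStep
        (seqRed M m (fun k => B k.castSucc)
          (fun k => by
            have hk := h k.castSucc
            rwa [Fin.succ_castSucc] at hk))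
        (B (Fin.last (m + 1)))
        (by
          have hl := h (Fin.last m)
          rwa [Fin.succ_last] at hl)

/-! Since `S(M) - X•1 = (M - X•1)⁻¹`, the reduction `R(S(M); B)` is `X•1` plus the Schur
complement of the interior block of `(M - X•1)⁻¹`, and block inversion identifies that complement
with `((M - X•1)_BB)⁻¹ = (M_BB - X•1)⁻¹`. Hence `R(S(M); B) = S(M_BB)`; as principal submatrices of
`M` again have entries of degree `≤ 0`, each step of a sequential reduction turns `S(M_{B_k})`
into `S(M_{B_{k+1}})`.

The invertibility of `M - X•1` comes from the valuation at infinity: its diagonal entries have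
valuation `exp 1` and all others valuation `≤ 1`, so the identity permutation strictly dominates
every other term of the Leibniz expansion of the determinant. -/

theorem Matrix.valuation_prod_perm_lt_prod_diag {K Γ₀ n : Type*} [Field K]
    [LinearOrderedCommGroupWithZero Γ₀] [Fintype n] [DecidableEq n] (v : Valuation K Γ₀)
    (A : Matrix n n K) (hoff : ∀ i j, i ≠ j → v (A i j) < v (A j j)) (hdiag : ∀ j, A j j ≠ 0)
    {σ : Equiv.Perm n} (hσ : σ ≠ 1) :
    ∏ j, v (A (σ j) j) < ∏ j, v (A j j) := by
  obtain ⟨j, hj⟩ : ∃ j, σ j ≠ j := not_forall.mp fun h => hσ (Equiv.ext h)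
  by_cases hzero : ∃ i, A (σ i) i = 0
  · obtain ⟨i, hi⟩ := hzero
    rw [Finset.prod_eq_zero (Finset.mem_univ i) (by rw [hi, map_zero])]
    exact Finset.prod_pos fun i _ => v.pos_iff.mpr (hdiag i)
  simp only [not_exists] at hzero
  refine Finset.prod_lt_prod (fun i _ => v.pos_iff.mpr (hzero i)) (fun i _ => ?_)
    ⟨j, Finset.mem_univ _, hoff _ _ hj⟩
  rcases eq_or_ne (σ i) i with h | h
  · rw [h]
  · exact (hoff _ _ h).le

theorem Matrix.det_ne_zero_of_valuation_offDiag_lt {K Γ₀ n : Type*} [Field K]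
    [LinearOrderedCommGroupWithZero Γ₀] [Fintype n] [DecidableEq n] (v : Valuation K Γ₀)
    (A : Matrix n n K) (hoff : ∀ i j, i ≠ j → v (A i j) < v (A j j)) (hdiag : ∀ j, A j j ≠ 0) :
    A.det ≠ 0 := by
  have hsign : ∀ σ : Equiv.Perm n, v ((Equiv.Perm.sign σ : ℤ) : K) = 1 := fun σ => by
    rcases Int.units_eq_one_or (Equiv.Perm.sign σ) with h | h <;> simp [h]
  have hlt : v (∑ σ ∈ Finset.univ.erase 1, (Equiv.Perm.sign σ : ℤ) * ∏ j, A (σ j) j) <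
      v (∏ j, A j j) := by
    refine v.map_sum_lt (by simpa [Finset.prod_eq_zero_iff] using hdiag) fun σ hσ => ?_
    rw [map_mul, hsign, one_mul, map_prod, map_prod]
    exact valuation_prod_perm_lt_prod_diag v A hoff hdiag (Finset.ne_of_mem_erase hσ)
  rw [← v.ne_zero_iff, det_apply', ← Finset.add_sum_erase _ _ (Finset.mem_univ 1)]
  simp only [Equiv.Perm.sign_one, Units.val_one, Int.cast_one, Equiv.Perm.coe_one, id_eq, one_mul]
  rw [v.map_add_eq_of_lt_left hlt, v.ne_zero_iff]
  exact Finset.prod_ne_zero_iff.mpr fun j _ => hdiag j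

theorem RatFunc.inftyValuation_le_one_of_intDegree_nonpos {F : Type*} [Field F]
    [DecidableEq (RatFunc F)] {x : RatFunc F} (hx : x.intDegree ≤ 0) :
    inftyValuation F x ≤ 1 := by
  rcases eq_or_ne x 0 with rfl | h
  · simp
  · rw [inftyValuation_apply, inftyValuation_of_nonzero F h, ← WithZero.exp_zero]
    exact WithZero.exp_le_exp.mpr hx

theorem isUnit_sub_X_smul_one {F α : Type*} [Field F] [Fintype α] [DecidableEq α]
    (M : Matrix α α (RatFunc F)) (hdeg : ∀ i j, (M i j).intDegree ≤ 0) :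
    IsUnit (M - (RatFunc.X : RatFunc F) • 1) := by
  classical
  set v := RatFunc.inftyValuation F
  have hle (i j : α) : v (M i j) < v RatFunc.X := by
    refine (RatFunc.inftyValuation_le_one_of_intDegree_nonpos (hdeg i j)).trans_lt ?_
    simp [v, ← WithZero.exp_zero]
  have hdiag (j : α) : v ((M - (RatFunc.X : RatFunc F) • 1) j j) = v RatFunc.X := by
    simpa using v.map_sub_eq_of_lt_right (hle j j)
  rw [isUnit_iff_isUnit_det, isUnit_iff_ne_zero]
  refine det_ne_zero_of_valuation_offDiag_lt v _ (fun i j hij => ?_) fun j => ?_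
  · rw [hdiag]
    simpa [one_apply_ne hij] using hle i j
  · rw [← v.ne_zero_iff, hdiag]
    simp [v]

theorem Matrix.schur_complement_inv_fromBlocks {m n K : Type*} [Fintype m] [Fintype n]
    [DecidableEq m] [DecidableEq n] [CommRing K] (A : Matrix m m K) (B : Matrix m n K)
    (C : Matrix n m K) (D : Matrix n n K) [Invertible A] (h : IsUnit (fromBlocks A B C D)) :
    IsUnit (fromBlocks A B C D)⁻¹.toBlocks₂₂ ∧
      (fromBlocks A B C D)⁻¹.toBlocks₁₁ -
          (fromBlocks A B C D)⁻¹.toBlocks₁₂ * ((fromBlocks A B C D)⁻¹.toBlocks₂₂)⁻¹ *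
            (fromBlocks A B C D)⁻¹.toBlocks₂₁ = A⁻¹ := by
  have := h.invertible
  have := invertibleOfFromBlocks₁₁Invertible A B C D
  set S := D - C * ⅟A * B
  rw [← invOf_eq_nonsing_inv A, ← invOf_eq_nonsing_inv (fromBlocks A B C D),
    invOf_fromBlocks₁₁_eq, toBlocks_fromBlocks₁₁, toBlocks_fromBlocks₁₂, toBlocks_fromBlocks₂₁,
    toBlocks_fromBlocks₂₂, invOf_eq_nonsing_inv S, inv_inv_of_invertible]
  refine ⟨isUnit_of_invertible _, ?_⟩
  simp only [Matrix.neg_mul, Matrix.mul_neg, neg_neg, Matrix.mul_assoc,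
    inv_mul_cancel_left_of_invertible]
  abel

def Finset.sumComplEquiv {α : Type*} [DecidableEq α] [Fintype α] (B : Finset α) :
    ↥B ⊕ ↥Bᶜ ≃ α :=
  (Equiv.sumCongr (Equiv.refl _) (Equiv.subtypeEquivRight fun _ => Finset.mem_compl)).trans
    (Equiv.sumCompl (· ∈ B))

theorem Matrix.reindex_sumComplEquiv_symm {α K : Type*} [DecidableEq α] [Fintype α]
    (N : Matrix α α K) (B : Finset α) :
    reindex B.sumComplEquiv.symm B.sumComplEquiv.symm N =
      fromBlocks (N.submatrix (Subtype.val : B → α) (Subtype.val : B → α))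
        (N.submatrix (Subtype.val : B → α) (Subtype.val : ↥Bᶜ → α))
        (N.submatrix (Subtype.val : ↥Bᶜ → α) (Subtype.val : B → α))
        (N.submatrix (Subtype.val : ↥Bᶜ → α) (Subtype.val : ↥Bᶜ → α)) := by
  ext (i | i) (j | j) <;> rfl

theorem Matrix.schur_complement_inv_submatrix {α K : Type*} [DecidableEq α] [Fintype α]
    [CommRing K] (N : Matrix α α K) (hN : IsUnit N) (B : Finset α)
    (hB : IsUnit (N.submatrix (Subtype.val : B → α) (Subtype.val : B → α))) :
    IsUnit (N⁻¹.submatrix (Subtype.val : ↥Bᶜ → α) (Subtype.val : ↥Bᶜ → α)) ∧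
      N⁻¹.submatrix (Subtype.val : B → α) (Subtype.val : B → α) -
          N⁻¹.submatrix (Subtype.val : B → α) (Subtype.val : ↥Bᶜ → α) *
            (N⁻¹.submatrix (Subtype.val : ↥Bᶜ → α) (Subtype.val : ↥Bᶜ → α))⁻¹ *
            N⁻¹.submatrix (Subtype.val : ↥Bᶜ → α) (Subtype.val : B → α) =
        (N.submatrix (Subtype.val : B → α) (Subtype.val : B → α))⁻¹ := by
  have := hB.invertible
  have h := schur_complement_inv_fromBlocks _ _ _ _
    ((reindex_sumComplEquiv_symm N B) ▸ (hN.map (reindexAlgEquiv K K B.sumComplEquiv.symm)))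
  rwa [← reindex_sumComplEquiv_symm, inv_reindex] at h

theorem Matrix.submatrix_add_smul_one_of_ne {α ι κ R : Type*} [DecidableEq α] [Semiring R]
    (P : Matrix α α R) (c : R) (f : ι → α) (g : κ → α) (h : ∀ i j, f i ≠ g j) :
    (P + c • 1).submatrix f g = P.submatrix f g := by
  ext i j
  simp [one_apply_ne (h i j)]

theorem Matrix.submatrix_add_smul_one_self {α ι R : Type*} [DecidableEq α] [DecidableEq ι]
    [Semiring R] (P : Matrix α α R) (c : R) {f : ι → α} (hf : Function.Injective f) :
    (P + c • 1).submatrix f f = P.submatrix f f + c • 1 := by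
  rw [← submatrix_one f hf]
  rfl

theorem Matrix.submatrix_sub_smul_one_self {α ι R : Type*} [DecidableEq α] [DecidableEq ι]
    [Ring R] (P : Matrix α α R) (c : R) {f : ι → α} (hf : Function.Injective f) :
    (P - c • 1).submatrix f f = P.submatrix f f - c • 1 := by
  rw [← submatrix_one f hf]
  rfl

theorem isUnit_submatrix_sub_X_smul_one {F α ι : Type*} [Field F] [DecidableEq α]
    [DecidableEq ι] [Fintype ι] {M : Matrix α α (RatFunc F)}
    (hdeg : ∀ i j, (M i j).intDegree ≤ 0) {f : ι → α} (hf : Function.Injective f) :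
    IsUnit ((M - (RatFunc.X : RatFunc F) • 1).submatrix f f) := by
  rw [submatrix_sub_smul_one_self _ _ hf]
  exact isUnit_sub_X_smul_one _ fun _ _ => hdeg _ _

theorem specInv_submatrix_compl_sub_X_smul_one {α : Type} [Fintype α] [DecidableEq α]
    (M : Matrix α α (RatFunc ℂ)) (B : Finset α) :
    (specInv M).submatrix (Subtype.val : ↥Bᶜ → α) (Subtype.val : ↥Bᶜ → α) -
        (RatFunc.X : RatFunc ℂ) • 1 =
      (M - (RatFunc.X : RatFunc ℂ) • 1)⁻¹.submatrix (Subtype.val : ↥Bᶜ → α)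
        (Subtype.val : ↥Bᶜ → α) := by
  rw [specInv, submatrix_add_smul_one_self _ _ Subtype.val_injective, add_sub_cancel_right]

theorem isoRed_specInv {α : Type} [Fintype α] [DecidableEq α] (M : Matrix α α (RatFunc ℂ))
    (hdeg : ∀ i j, (M i j).intDegree ≤ 0) (B : Finset α) :
    isoRed (specInv M) B = specInv (M.submatrix (Subtype.val : B → α) (Subtype.val : B → α)) := by
  have hne : ∀ (i : B) (j : ↥Bᶜ), i.val ≠ j.val := fun i j h =>
    Finset.mem_compl.mp j.2 (h ▸ i.2)
  have hS : specInv M = (M - (RatFunc.X : RatFunc ℂ) • 1)⁻¹ + (RatFunc.X : RatFunc ℂ) • 1 := rfl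
  rw [isoRed, specInv_submatrix_compl_sub_X_smul_one, hS,
    submatrix_add_smul_one_self _ _ Subtype.val_injective,
    submatrix_add_smul_one_of_ne _ _ _ _ hne,
    submatrix_add_smul_one_of_ne _ _ _ _ fun i j => (hne j i).symm, add_sub_right_comm,
    (schur_complement_inv_submatrix _ (isUnit_sub_X_smul_one M hdeg) B
      (isUnit_submatrix_sub_X_smul_one hdeg Subtype.val_injective)).2,
    specInv, submatrix_sub_smul_one_self _ _ Subtype.val_injective]

theorem specInv_reindex {α β : Type} [Fintype α] [DecidableEq α] [Fintype β] [DecidableEq β]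
    (e : α ≃ β) (Q : Matrix α α (RatFunc ℂ)) :
    reindex e e (specInv Q) = specInv (reindex e e Q) := by
  rw [specInv, specInv, ← coe_reindexAlgEquiv (RatFunc ℂ) (RatFunc ℂ), map_add, map_smul, map_one,
    coe_reindexAlgEquiv, ← inv_reindex, ← coe_reindexAlgEquiv (RatFunc ℂ) (RatFunc ℂ), map_sub,
    map_smul, map_one]

theorem seqRed_specInv {n : ℕ} {M : Matrix (Fin n) (Fin n) (RatFunc ℂ)}
    (hdeg : ∀ i j, (M i j).intDegree ≤ 0) (m : ℕ) (B : Fin (m + 1) → Finset (Fin n))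
    (hchain : ∀ k : Fin m, B k.succ ⊆ B k.castSucc) :
    seqRed (specInv M) m B hchain =
      specInv (M.submatrix (Subtype.val : ↥(B (Fin.last m)) → Fin n) Subtype.val) := by
  induction m with
  | zero => exact isoRed_specInv M hdeg _
  | succ m ih =>
    rw [seqRed, ih, redStep, isoRed_specInv (M.submatrix _ _) fun _ _ => hdeg _ _, specInv_reindex]
    rfl

theorem seqRed_specInv_exists_and_eq_isoRed_last_general {n : ℕ}
    (M : Matrix (Fin n) (Fin n) (RatFunc ℂ))
    (hdeg : ∀ i j, (M i j).intDegree ≤ 0)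
    (m : ℕ) (B : Fin (m + 1) → Finset (Fin n))
    (hchain : ∀ k : Fin m, B k.succ ⊆ B k.castSucc) :
    IsUnit ((specInv M).submatrix
        (Subtype.val : ↥(B (Fin.last m))ᶜ → Fin n) (Subtype.val : ↥(B (Fin.last m))ᶜ → Fin n) -
      (RatFunc.X : RatFunc ℂ) • 1) ∧
    seqRed (specInv M) m B hchain = isoRed (specInv M) (B (Fin.last m)) := by
  rw [specInv_submatrix_compl_sub_X_smul_one, seqRed_specInv hdeg, isoRed_specInv M hdeg]
  exact ⟨(schur_complement_inv_submatrix _ (isUnit_sub_X_smul_one M hdeg) _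
    (isUnit_submatrix_sub_X_smul_one hdeg Subtype.val_injective)).1, rfl⟩

theorem seqRed_specInv_exists_and_eq_isoRed_last {n : ℕ}
    (M : Matrix (Fin n) (Fin n) (RatFunc ℂ))
    (hdeg : ∀ i j, (M i j).intDegree ≤ 0)
    (m : ℕ) (B : Fin (m + 1) → Finset (Fin n))
    (hchain : ∀ k : Fin m, B k.succ ⊆ B k.castSucc)
    (hlast : (B (Fin.last m)).Nonempty) :
    IsUnit ((specInv M).submatrix
        (Subtype.val : ↥(B (Fin.last m))ᶜ → Fin n) (Subtype.val : ↥(B (Fin.last m))ᶜ → Fin n) -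
      (RatFunc.X : RatFunc ℂ) • 1) ∧
    seqRed (specInv M) m B hchain = isoRed (specInv M) (B (Fin.last m)) :=
  seqRed_specInv_exists_and_eq_isoRed_last_general M hdeg m B hchain
end
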